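/- arXiv:2504.05872 — 7 statements merged into one kernel-verified Lean document; each statement's English description precedes it below -/
import Mathlib

section
/- Let d ≥ 3 be a natural number and let n2, n3, n4 be natural numbers satisfying the naive combinatorial count 2(n2 + 3·n3 + 6·n4) = d(d−1). Suppose there exists an integer r with r² − r(d−1) + (d−1)² = n2 + 4·n3 + 9·n4. Then 2(n2 + n3) ≤ 3d − 3. -/
/-- Proposition 3.1 a) (EstimDLine), first estimate: for a free line arrangement of
`d ≥ 3` lines with only double, triple and quadruple points (freeness encoded by the
du Plessis–Wall identity for some integer `r = mdr(f)`), one has `2(n2+n3) ≤ 3d-3`. -/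
theorem stmt_0 (d n2 n3 n4 : ℕ) (hd : 3 ≤ d)
    (hcount : 2 * (n2 + 3 * n3 + 6 * n4) = d * (d - 1))
    (hfree : ∃ r : ℤ, r ^ 2 - r * ((d : ℤ) - 1) + ((d : ℤ) - 1) ^ 2
      = (n2 : ℤ) + 4 * n3 + 9 * n4) :
    2 * (n2 + n3) ≤ 3 * d - 3 := by
  obtain ⟨r, hr⟩ := hfree
  have hc : (2 * (n2 + 3 * n3 + 6 * n4) : ℤ) = (d : ℤ) * ((d : ℤ) - 1) := by
    have := congrArg (Nat.cast : ℕ → ℤ) hcount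
    push_cast [Nat.cast_sub (by omega : 1 ≤ d)] at this
    linarith
  have key : (2 * (n2 + n3) : ℤ) ≤ 3 * (d : ℤ) - 3 := by
    nlinarith [sq_nonneg (2 * r - ((d : ℤ) - 1)), sq_nonneg ((d : ℤ) - 1)]
  have := (Nat.cast_le (α := ℤ)).mp (by push_cast [Nat.cast_sub (by omega : 3 ≤ 3 * d)]; linarith : ((2 * (n2 + n3) : ℕ) : ℤ) ≤ ((3 * d - 3 : ℕ) : ℤ))
  exact this
end

section
/- Let d ≥ 3 be a natural number and let n2, n3, n4 be natural numbers satisfying the naive combinatorial count 2(n2 + 3·n3 + 6·n4) = d(d−1). Suppose there exists an integer r with r² − r(d−1) + (d−1)² = n2 + 4·n3 + 9·n4. Then (as integers) d² − 10d + 9 ≤ 12·n4. -/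
/-- Proposition 3.1 a) (EstimDLine), second estimate: for a free line arrangement of
`d ≥ 3` lines with only double, triple and quadruple points (freeness encoded by the
du Plessis–Wall identity for some integer `r = mdr(f)`), one has `d² - 10d + 9 ≤ 12·n4`. -/
theorem stmt_1 (d n2 n3 n4 : ℕ) (hd : 3 ≤ d)
    (hcount : 2 * (n2 + 3 * n3 + 6 * n4) = d * (d - 1))
    (hfree : ∃ r : ℤ, r ^ 2 - r * ((d : ℤ) - 1) + ((d : ℤ) - 1) ^ 2
      = (n2 : ℤ) + 4 * n3 + 9 * n4) :
    (d : ℤ) ^ 2 - 10 * d + 9 ≤ 12 * n4 := by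
  obtain ⟨r, hr⟩ := hfree
  have hd1 : 1 ≤ d := by omega
  have hc : (2 : ℤ) * ((n2 : ℤ) + 3 * n3 + 6 * n4) = (d : ℤ) * ((d : ℤ) - 1) := by
    have := congrArg (Nat.cast : ℕ → ℤ) hcount
    push_cast [Nat.cast_sub hd1] at this
    linarith
  have h2 : (0 : ℤ) ≤ n2 := Int.natCast_nonneg n2
  have h3 : (0 : ℤ) ≤ n3 := Int.natCast_nonneg n3
  nlinarith [sq_nonneg (2 * r - ((d : ℤ) - 1)), hr, hc, h2, h3]
end

section
/- Let d ≥ 3 be a natural number and let n2, n3, n4 be natural numbers satisfying: (i) the naive combinatorial count 2(n2 + 3·n3 + 6·n4) = d(d−1); (ii) Melchior's inequality n2 ≥ 3 + n4; and (iii) the bound 2(n2 + n3) ≤ 3d − 3. Then (d−3)(d−19) ≤ 0; in particular d ≤ 19. -/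
/-- Degree bound in the proof of Theorem 3.3 (Theorem A): the naive count, Melchior's
inequality `n2 ≥ 3 + n4` and the bound `2(n2+n3) ≤ 3d-3` imply `(d-3)(d-19) ≤ 0`,
in particular `d ≤ 19`. -/
theorem stmt_2 (d n2 n3 n4 : ℕ) (hd : 3 ≤ d)
    (hcount : 2 * (n2 + 3 * n3 + 6 * n4) = d * (d - 1))
    (hmel : n2 ≥ 3 + n4)
    (hbound : 2 * (n2 + n3) ≤ 3 * d - 3) :
    ((d : ℤ) - 3) * ((d : ℤ) - 19) ≤ 0 ∧ d ≤ 19 := by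
  have h1 : (1:ℕ) ≤ d := by omega
  have h3 : (3:ℕ) ≤ 3 * d := by omega
  zify [h1, h3] at hcount hbound
  have key : ((d : ℤ) - 3) * ((d : ℤ) - 19) ≤ 0 := by nlinarith [hcount, hbound, hmel]
  refine ⟨key, ?_⟩
  by_contra h
  push_neg at h
  have : (19:ℤ) < d := by exact_mod_cast h
  nlinarith
end

section
/- Let m ≥ 2 and set d = 2m+1. Let n2, n3, n4 be natural numbers satisfying: (i) the naive combinatorial count n2 + 3·n3 + 6·n4 = m(2m+1); (ii) there exists an integer r with r² − r(d−1) + (d−1)² = n2 + 4·n3 + 9·n4; and (iii) the M-arrangement condition n2 + 4·n3 + 9·n4 = 3m² + 1. Then n2 + n3 ≤ 3m and (as integers) 3m² − 12m + 1 ≤ 9·n4. -/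
/-- Proposition 4.6 a): for an `M`-line arrangement of odd degree `d = 2m+1` (`m ≥ 2`)
with only double, triple and quadruple points (freeness encoded by the du Plessis–Wall
identity), one has `n2 + n3 ≤ 3m` and `3m² - 12m + 1 ≤ 9·n4`. -/
theorem stmt_3 (d m n2 n3 n4 : ℕ) (hm : 2 ≤ m) (hd : d = 2 * m + 1)
    (hcount : n2 + 3 * n3 + 6 * n4 = m * (2 * m + 1))
    (hfree : ∃ r : ℤ, r ^ 2 - r * ((d : ℤ) - 1) + ((d : ℤ) - 1) ^ 2
      = (n2 : ℤ) + 4 * n3 + 9 * n4)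
    (hM : n2 + 4 * n3 + 9 * n4 = 3 * m ^ 2 + 1) :
    n2 + n3 ≤ 3 * m ∧ 3 * (m : ℤ) ^ 2 - 12 * m + 1 ≤ 9 * n4 := by
  have hMM : m * (2 * m + 1) = 2 * (m * m) + m := by ring
  have hsq : m ^ 2 = m * m := sq m
  rw [hMM] at hcount
  rw [hsq] at hM
  have hmm : m ≤ m * m := Nat.le_mul_of_pos_left m (by omega)
  have h2 : 3 * (m * m) + 1 ≤ 9 * n4 + 12 * m := by omega
  constructor
  · omega
  · have : ((3 * (m * m) + 1 : ℕ) : ℤ) ≤ ((9 * n4 + 12 * m : ℕ) : ℤ) := by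
      exact_mod_cast h2
    push_cast at this
    nlinarith [this]
end

section
/- Let m ≥ 3 and set d = 2m. Let n2, n3, n4 be natural numbers satisfying: (i) the naive combinatorial count n2 + 3·n3 + 6·n4 = m(2m−1); (ii) there exists an integer r with r² − r(d−1) + (d−1)² = n2 + 4·n3 + 9·n4; and (iii) the M-arrangement condition n2 + 4·n3 + 9·n4 = 3m² − 3m + 3. Then n2 + n3 ≤ 3m − 2 and (as integers) m² − 5m + 3 ≤ 3·n4. -/
/-- Proposition 4.6 b): for an `M`-line arrangement of even degree `d = 2m` (`m ≥ 3`)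
with only double, triple and quadruple points (freeness encoded by the du Plessis–Wall
identity), one has `n2 + n3 ≤ 3m - 2` and `m² - 5m + 3 ≤ 3·n4`. -/
theorem stmt_4 (d m n2 n3 n4 : ℕ) (hm : 3 ≤ m) (hd : d = 2 * m)
    (hcount : n2 + 3 * n3 + 6 * n4 = m * (2 * m - 1))
    (hfree : ∃ r : ℤ, r ^ 2 - r * ((d : ℤ) - 1) + ((d : ℤ) - 1) ^ 2
      = (n2 : ℤ) + 4 * n3 + 9 * n4)
    (hM : n2 + 4 * n3 + 9 * n4 = 3 * m ^ 2 - 3 * m + 3) :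
    n2 + n3 ≤ 3 * m - 2 ∧ (m : ℤ) ^ 2 - 5 * m + 3 ≤ 3 * n4 := by
  have h1 : (1:ℕ) ≤ 2 * m := by omega
  have h2 : 3 * m ≤ 3 * m ^ 2 := by nlinarith
  have hcz : (n2:ℤ) + 3 * n3 + 6 * n4 = 2 * (m:ℤ) ^ 2 - m := by
    have := hcount
    zify [h1] at this
    linarith [this]
  have hMz : (n2:ℤ) + 4 * n3 + 9 * n4 = 3 * (m:ℤ) ^ 2 - 3 * m + 3 := by
    zify [h2] at hM
    linarith [hM]
  constructor
  · have h3 : (n2:ℤ) + n3 + 6 = 3 * (m:ℤ) := by linarith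
    have h4 : n2 + n3 + 6 = 3 * m := by exact_mod_cast h3
    omega
  · have hn2 : (0:ℤ) ≤ (n2:ℤ) := by positivity
    linarith
end

section
/- Let m ≥ 4 and let n2, n3, n4 be natural numbers satisfying the naive combinatorial count n2 + 3·n3 + 6·n4 = m(2m+1) and the odd M-arrangement condition n2 + 4·n3 + 9·n4 = 3m² + 1. Then, setting (in the integers) c1² = 9 − 5(2m+1) + 2·n2 + 5·n3 + 8·n4 and c2 = 3 − 2(2m+1) + n2 + 2·n3 + 3·n4, one has 4·c1² ≤ 11·c2. -/
/-- Theorem 5.1 a): for an `M`-line arrangement of odd degree `d = 2m+1 ≥ 9`, with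
`c1² = 9 - 5d + 2n2 + 5n3 + 8n4` and `c2 = 3 - 2d + n2 + 2n3 + 3n4`, one has
`4·c1² ≤ 11·c2` (i.e. `c1²/c2 ≤ 11/4`). -/
theorem stmt_11 (m n2 n3 n4 : ℕ) (hm : 4 ≤ m)
    (hcount : n2 + 3 * n3 + 6 * n4 = m * (2 * m + 1))
    (hM : n2 + 4 * n3 + 9 * n4 = 3 * m ^ 2 + 1) :
    4 * (9 - 5 * (2 * (m : ℤ) + 1) + 2 * n2 + 5 * n3 + 8 * n4)
      ≤ 11 * (3 - 2 * (2 * (m : ℤ) + 1) + ((n2 : ℤ) + 2 * n3 + 3 * n4)) := by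
  have h1 : (n2 : ℤ) + 3 * n3 + 6 * n4 = m * (2 * m + 1) := by exact_mod_cast hcount
  have h2 : (n2 : ℤ) + 4 * n3 + 9 * n4 = 3 * (m : ℤ) ^ 2 + 1 := by exact_mod_cast hM
  have hm' : (4 : ℤ) ≤ m := by exact_mod_cast hm
  have h0 : (0 : ℤ) ≤ n2 := Int.ofNat_nonneg n2
  nlinarith [sq_nonneg ((m : ℤ) - 4), sq_nonneg ((m : ℤ) + 6)]
end

section
/- Let m ≥ 5 and let n2, n3, n4 be natural numbers satisfying the naive combinatorial count n2 + 3·n3 + 6·n4 = m(2m−1) and the even M-arrangement condition n2 + 4·n3 + 9·n4 = 3m² − 3m + 3. Then, setting (in the integers) c1² = 9 − 10m + 2·n2 + 5·n3 + 8·n4 and c2 = 3 − 4m + n2 + 2·n3 + 3·n4, one has 5·c1² ≤ 14·c2. -/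
/-- Theorem 5.1 b): for an `M`-line arrangement of even degree `d = 2m ≥ 10`, with
`c1² = 9 - 10m + 2n2 + 5n3 + 8n4` and `c2 = 3 - 4m + n2 + 2n3 + 3n4`, one has
`5·c1² ≤ 14·c2` (i.e. `c1²/c2 ≤ 14/5`). -/
theorem stmt_14 (m n2 n3 n4 : ℕ) (hm : 5 ≤ m)
    (hcount : n2 + 3 * n3 + 6 * n4 = m * (2 * m - 1))
    (hM : n2 + 4 * n3 + 9 * n4 = 3 * m ^ 2 - 3 * m + 3) :
    5 * (9 - 10 * (m : ℤ) + 2 * n2 + 5 * n3 + 8 * n4)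
      ≤ 14 * (3 - 4 * (m : ℤ) + ((n2 : ℤ) + 2 * n3 + 3 * n4)) := by
  have hle : 3 * m ≤ 3 * m ^ 2 := by nlinarith
  zify [show 1 ≤ 2 * m by omega, hle] at hcount hM
  have hn2 : (0 : ℤ) ≤ n2 := Nat.cast_nonneg _
  have hm' : (5 : ℤ) ≤ m := by exact_mod_cast hm
  nlinarith [mul_nonneg (by linarith : (0:ℤ) ≤ (m:ℤ) - 5) (by linarith : (0:ℤ) ≤ 2*(m:ℤ) + 9)]
end
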